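/- arXiv:1911.00469 — 2 statements merged into one kernel-verified Lean document; each statement's English description precedes it below -/
import Mathlib

section
/- (Lemma 2, weighted plausibility is stochastically larger than uniform.) Let Y be a measurable space, Θ an index set, and (P_θ)_{θ∈Θ} a family of probability measures on Y. Let w : Y → ℝ be a measurable function (a test statistic free of θ), and for each θ define F_θ(t) = P_θ({y : w(y) ≤ t}). For a nonempty subset A ⊆ Θ define the weighted plausibility pl^w(y) = sup_{θ'∈A} F_{θ'}(w(y)). Then for every θ ∈ A and every α ∈ [0, 1], the P_θ-outer measure of the set {y ∈ Y : pl^w(y) ≤ α} is at most α. -/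
/-!
Since `θ ∈ A`, the plausibility dominates `F θ (w y)`, so it suffices to show
`P θ {y | F θ (w y) ≤ α} ≤ α`. The set `s = {t | F θ t ≤ α}` is a lower set of `ℝ`, so
`{y | w y ∈ s}` is the increasing union of the sets `{y | w y ≤ t}`, `t ∈ s`, each of measure at
most `α`, and continuity from below (valid for outer measures) concludes.
-/

open MeasureTheory Set Filter

section

variable {Ω : Type*} [MeasurableSpace Ω] (μ : Measure Ω) (X : Ω → ℝ)

theorem measure_preimage_le_of_isLowerSet {s : Set ℝ} (hs : IsLowerSet s) {α : ENNReal}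
    (h : ∀ t ∈ s, μ {ω | X ω ≤ t} ≤ α) : μ (X ⁻¹' s) ≤ α := by
  -- makes `atTop` on the subtype `s` countably generated, as continuity from below requires
  have : s.OrdConnected := hs.ordConnected
  have hunion : X ⁻¹' s = ⋃ t : s, {ω | X ω ≤ t} := by
    ext ω
    simp only [mem_preimage, mem_iUnion, mem_ofPred_eq, Subtype.exists, exists_prop]
    exact ⟨fun hω ↦ ⟨X ω, hω, le_rfl⟩, fun ⟨t, ht, hle⟩ ↦ hs hle ht⟩
  have hmono : Monotone fun t : s ↦ {ω | X ω ≤ t} :=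
    fun _ _ hst _ (hω : X _ ≤ _) ↦ show X _ ≤ _ from hω.trans hst
  rw [hunion, hmono.measure_iUnion]
  exact iSup_le fun t ↦ h t t.2

theorem measure_cdf_comp_le (α : ENNReal) :
    μ {ω | μ {ω' | X ω' ≤ X ω} ≤ α} ≤ α :=
  measure_preimage_le_of_isLowerSet μ X
    (s := {t | μ {ω | X ω ≤ t} ≤ α})
    (fun _ _ hst ht ↦ (measure_mono fun _ hω ↦ le_trans hω hst).trans ht) fun _ ht ↦ ht

end

theorem weighted_plausibility_stochastically_larger_than_uniform_general
    {Y : Type*} [MeasurableSpace Y] {Θ : Type*}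
    (P : Θ → Measure Y)
    (w : Y → ℝ)
    (F : Θ → ℝ → ENNReal) (hF : ∀ θ t, F θ t = P θ {y | w y ≤ t})
    (A : Set Θ)
    (pl : Y → ENNReal) (hpl : ∀ y, pl y = ⨆ θ' ∈ A, F θ' (w y))
    (θ : Θ) (hθ : θ ∈ A) (α : ENNReal) :
    P θ {y : Y | pl y ≤ α} ≤ α := by
  have hsub : {y | pl y ≤ α} ⊆ {y | P θ {y' | w y' ≤ w y} ≤ α} := fun y hy ↦ by
    rw [mem_ofPred_eq, ← hF]
    exact (le_biSup (fun θ' ↦ F θ' (w y)) hθ).trans ((hpl y).symm ▸ hy)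
  exact (measure_mono hsub).trans (measure_cdf_comp_le (P θ) w α)

/-- Weighted plausibility is stochastically larger than uniform: for a family of probability
measures `P θ`, a statistic `w` free of `θ` with distribution functions
`F θ t = P θ {y | w y ≤ t}`, and the weighted plausibility
`pl y = ⨆ θ' ∈ A, F θ' (w y)`, we have, for every `θ ∈ A` and `α ∈ [0,1]`,
`P θ {y | pl y ≤ α} ≤ α` (outer measure of the sublevel set). -/
theorem weighted_plausibility_stochastically_larger_than_uniform
    {Y : Type*} [MeasurableSpace Y] {Θ : Type*}
    (P : Θ → Measure Y) (hP : ∀ θ, IsProbabilityMeasure (P θ))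
    (w : Y → ℝ) (hw : Measurable w)
    (F : Θ → ℝ → ENNReal) (hF : ∀ θ t, F θ t = P θ {y | w y ≤ t})
    (A : Set Θ) (hA : A.Nonempty)
    (pl : Y → ENNReal) (hpl : ∀ y, pl y = ⨆ θ' ∈ A, F θ' (w y))
    (θ : Θ) (hθ : θ ∈ A) (α : ENNReal) (hα : α ≤ 1) :
    P θ {y : Y | pl y ≤ α} ≤ α :=
  weighted_plausibility_stochastically_larger_than_uniform_general P w F hF A pl hpl θ hθ α
end

section
/- (Theorem 1, Martin 2015.) Let Y be a measurable space, Θ an index set, and (P_θ)_{θ∈Θ} a family of probability measures on Y. For each θ ∈ Θ let T_θ : Y → ℝ be a measurable statistic and define F_θ(t) = P_θ({y : T_θ(y) ≤ t}). For a nonempty subset A ⊆ Θ define the plausibility function pl(y) = sup_{θ'∈A} F_{θ'}(T_{θ'}(y)). Then for every θ ∈ A and every α ∈ [0, 1], the P_θ-outer measure of the set {y ∈ Y : pl(y) ≤ α} is at most α; that is, the plausibility function is stochastically larger than uniform under any P_θ with θ ∈ A. -/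
open MeasureTheory Set Filter Topology

lemma cdf_sublevel_le {Y : Type*} [MeasurableSpace Y] (μ : Measure Y) [IsProbabilityMeasure μ]
    (T : Y → ℝ) (hT : Measurable T) (α : ENNReal) (hα : α < 1) :
    μ {y | μ {z | T z ≤ T y} ≤ α} ≤ α := by
  set G : ℝ → ENNReal := fun t => μ {z | T z ≤ t} with hG
  set S : Set ℝ := {t | G t ≤ α} with hS
  have hGmono : Monotone G := fun s t hst => measure_mono (fun z hz => le_trans hz hst)
  have hBsub : {y | μ {z | T z ≤ T y} ≤ α} ⊆ {y | T y ∈ S} := fun y hy => hy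
  by_cases hSne : S.Nonempty
  · have hprob : IsProbabilityMeasure (μ.map T) := Measure.isProbabilityMeasure_map hT.aemeasurable
    have hmap : ∀ t, G t = μ.map T (Iic t) := fun t => by
      rw [Measure.map_apply hT measurableSet_Iic]; rfl
    have htend : Tendsto G atTop (𝓝 1) := by
      have := tendsto_measure_Iic_atTop (μ := μ.map T)
      simpa [measure_univ, ← hmap] using this
    obtain ⟨t0, ht0⟩ : ∃ t0, ∀ t ≥ t0, α < G t := by
      have := htend.eventually (eventually_gt_nhds hα)
      exact this.exists_forall_of_atTop
    have hbdd : BddAbove S := ⟨t0, fun t ht => by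
      by_contra h
      exact absurd (ht0 t (le_of_not_ge h)) (not_lt.2 ht)⟩
    set s0 := sSup S with hs0
    have hle : ∀ t ∈ S, t ≤ s0 := fun t ht => le_csSup hbdd ht
    by_cases hmem : s0 ∈ S
    · calc μ {y | μ {z | T z ≤ T y} ≤ α} ≤ μ {z | T z ≤ s0} :=
            measure_mono (fun y hy => hle _ (hBsub hy))
        _ ≤ α := hmem
    · obtain ⟨u, humono, hutend, humem⟩ :
          ∃ u : ℕ → ℝ, Monotone u ∧ Tendsto u atTop (𝓝 s0) ∧ ∀ n, u n ∈ S := by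
        obtain ⟨u, h1, _, h3, h4⟩ := (isLUB_csSup hSne hbdd).exists_seq_monotone_tendsto hSne
        exact ⟨u, h1, h3, h4⟩
      have hsub : {y | μ {z | T z ≤ T y} ≤ α} ⊆ ⋃ n, {z | T z ≤ u n} := by
        intro y hy
        have hTy : T y ∈ S := hBsub hy
        have hlt : T y < s0 := lt_of_le_of_ne (hle _ hTy) (fun h => hmem (h ▸ hTy))
        obtain ⟨n, hn⟩ := (hutend.eventually (eventually_gt_nhds hlt)).exists
        exact mem_iUnion.2 ⟨n, hn.le⟩
      calc μ {y | μ {z | T z ≤ T y} ≤ α} ≤ μ (⋃ n, {z | T z ≤ u n}) := measure_mono hsub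
        _ = ⨆ n, G (u n) := by
            have hdir : Directed (· ⊆ ·) fun n => {z : Y | T z ≤ u n} :=
              Monotone.directed_le fun m n hmn z hz => le_trans hz (humono hmn)
            exact hdir.measure_iUnion (μ := μ)
        _ ≤ α := iSup_le fun n => humem n
  · have : {y | μ {z | T z ≤ T y} ≤ α} = ∅ := by
      ext y; simp only [mem_empty_iff_false, iff_false, mem_setOf_eq]
      intro hy; exact hSne ⟨T y, hy⟩
    simp [this]


/-- Theorem 1 (Martin 2015): the plausibility function
`pl y = ⨆ θ' ∈ A, F θ' (T θ' y)`, where `F θ t = P θ {y | T θ y ≤ t}`, is stochastically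
larger than uniform under any `P θ` with `θ ∈ A`: for every `α ∈ [0,1]`,
`P θ {y | pl y ≤ α} ≤ α` (outer measure of the sublevel set). -/
theorem plausibility_stochastically_larger_than_uniform
    {Y : Type*} [MeasurableSpace Y] {Θ : Type*}
    (P : Θ → Measure Y) (hP : ∀ θ, IsProbabilityMeasure (P θ))
    (T : Θ → Y → ℝ) (hT : ∀ θ, Measurable (T θ))
    (F : Θ → ℝ → ENNReal) (hF : ∀ θ t, F θ t = P θ {y | T θ y ≤ t})
    (A : Set Θ) (hA : A.Nonempty)
    (pl : Y → ENNReal) (hpl : ∀ y, pl y = ⨆ θ' ∈ A, F θ' (T θ' y))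
    (θ : Θ) (hθ : θ ∈ A) (α : ENNReal) (hα : α ≤ 1) :
    P θ {y : Y | pl y ≤ α} ≤ α := by
  haveI := hP θ
  rcases eq_or_lt_of_le hα with h1 | h1
  · calc P θ {y : Y | pl y ≤ α} ≤ P θ univ := measure_mono (subset_univ _)
      _ = 1 := measure_univ
      _ = α := h1.symm
  · have hsub : {y : Y | pl y ≤ α} ⊆ {y | P θ {z | T θ z ≤ T θ y} ≤ α} := by
      intro y hy
      have h2 : F θ (T θ y) ≤ pl y := by
        rw [hpl y]; exact le_biSup (fun θ' => F θ' (T θ' y)) hθ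
      have := le_trans h2 hy
      rwa [hF] at this
    exact le_trans (measure_mono hsub) (cdf_sublevel_le (P θ) (T θ) (hT θ) α h1)
end
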